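/- arXiv:1710.01965 — 3 statements merged into one kernel-verified Lean document; each statement's English description precedes it below -/
import Mathlib

section
/- Let G be a finite directed graph with nonnegative arc capacities and distinguished nodes s, t, and let e be an arc of G. If the minimum s-t cut capacity of G with e removed is strictly less than the minimum s-t cut capacity of G, then the minimum capacity over all s-t cuts of G that contain e equals (minimum s-t cut capacity of G − e) + c(e). -/
open Finset

/-- Capacity of the s-t cut determined by `S` (arcs from `S` to its complement). -/
def cutCap {V : Type*} [Fintype V] [DecidableEq V] (c : V → V → ℝ) (S : Finset V) : ℝ :=
  ∑ x ∈ S, ∑ y ∈ Sᶜ, c x y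

/-- Minimum capacity of an s-t cut. -/
noncomputable def minCut {V : Type*} [Fintype V] [DecidableEq V] (c : V → V → ℝ)
    (s t : V) : ℝ :=
  sInf {r | ∃ S : Finset V, s ∈ S ∧ t ∉ S ∧ r = cutCap c S}

/-- The graph with arc `e` deleted (its capacity set to `0`). -/
def delArc {V : Type*} [DecidableEq V] (c : V → V → ℝ) (e : V × V) : V → V → ℝ :=
  fun x y => if (x, y) = e then 0 else c x y

/-- Minimum capacity among s-t cuts crossed by the arc `e`. -/
noncomputable def minCutCross {V : Type*} [Fintype V] [DecidableEq V] (c : V → V → ℝ)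
    (s t : V) (e : V × V) : ℝ :=
  sInf {r | ∃ S : Finset V, s ∈ S ∧ t ∉ S ∧ e.1 ∈ S ∧ e.2 ∉ S ∧ r = cutCap c S}

/-!
A cut not containing `e` has the same capacity in `G` and in `G − e`, while a cut containing `e`
loses exactly `c(e)` when `e` is deleted. As `minCut (G − e) < minCut G`, a minimum cut of `G − e`
must therefore contain `e`; its capacity in `G` is `minCut (G − e) + c(e)`, and no cut containing
`e` can be cheaper in `G`.
-/

section

variable {V : Type*} [Fintype V] [DecidableEq V]

lemma cutCap_eq_sum_product (c : V → V → ℝ) (S : Finset V) :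
    cutCap c S = ∑ p ∈ S ×ˢ Sᶜ, c p.1 p.2 :=
  (sum_product S Sᶜ fun p => c p.1 p.2).symm

lemma cutCap_eq_cutCap_delArc_add (c : V → V → ℝ) (e : V × V) (S : Finset V) :
    cutCap c S = cutCap (delArc c e) S + if e.1 ∈ S ∧ e.2 ∉ S then c e.1 e.2 else 0 := by
  have hsplit : ∀ p : V × V,
      c p.1 p.2 = delArc c e p.1 p.2 + if e = p then c p.1 p.2 else 0 := by
    intro p
    by_cases hp : e = p <;> simp [delArc, hp, eq_comm]
  rw [cutCap_eq_sum_product, cutCap_eq_sum_product, sum_congr rfl fun p _ => hsplit p,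
    sum_add_distrib, sum_ite_eq]
  simp [mem_product]

lemma cutCap_delArc_of_not_crosses (c : V → V → ℝ) {e : V × V} {S : Finset V}
    (he : ¬(e.1 ∈ S ∧ e.2 ∉ S)) : cutCap (delArc c e) S = cutCap c S := by
  rw [cutCap_eq_cutCap_delArc_add c e S, if_neg he, add_zero]

lemma cutCap_eq_cutCap_delArc_add_of_crosses (c : V → V → ℝ) {e : V × V} {S : Finset V}
    (h₁ : e.1 ∈ S) (h₂ : e.2 ∉ S) : cutCap c S = cutCap (delArc c e) S + c e.1 e.2 := by
  rw [cutCap_eq_cutCap_delArc_add c e S, if_pos ⟨h₁, h₂⟩]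

lemma minCut_eq_sInf_image (c : V → V → ℝ) (s t : V) :
    minCut c s t = sInf (cutCap c '' {S | s ∈ S ∧ t ∉ S}) := by
  simp only [minCut, Set.image, Set.mem_ofPred_eq, and_assoc, eq_comm]

lemma minCutCross_eq_sInf_image (c : V → V → ℝ) (s t : V) (e : V × V) :
    minCutCross c s t e =
      sInf (cutCap c '' {S | s ∈ S ∧ t ∉ S ∧ e.1 ∈ S ∧ e.2 ∉ S}) := by
  simp only [minCutCross, Set.image, Set.mem_ofPred_eq, and_assoc, eq_comm]

lemma minCut_le_cutCap (c : V → V → ℝ) {s t : V} {S : Finset V} (hs : s ∈ S) (ht : t ∉ S) :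
    minCut c s t ≤ cutCap c S := by
  rw [minCut_eq_sInf_image]
  exact csInf_le (Set.toFinite _).bddBelow ⟨S, ⟨hs, ht⟩, rfl⟩

lemma exists_cutCap_eq_minCut (c : V → V → ℝ) {s t : V} (hst : s ≠ t) :
    ∃ S : Finset V, s ∈ S ∧ t ∉ S ∧ cutCap c S = minCut c s t := by
  have hne : (cutCap c '' {S | s ∈ S ∧ t ∉ S}).Nonempty :=
    ⟨_, {s}, ⟨mem_singleton_self s, by simpa using hst.symm⟩, rfl⟩
  obtain ⟨S, ⟨hs, ht⟩, hS⟩ := hne.csInf_mem (Set.toFinite _)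
  exact ⟨S, hs, ht, by rw [hS, minCut_eq_sInf_image]⟩

lemma minCutCross_le_cutCap (c : V → V → ℝ) {s t : V} {e : V × V} {S : Finset V}
    (hs : s ∈ S) (ht : t ∉ S) (h₁ : e.1 ∈ S) (h₂ : e.2 ∉ S) :
    minCutCross c s t e ≤ cutCap c S := by
  rw [minCutCross_eq_sInf_image]
  exact csInf_le (Set.toFinite _).bddBelow ⟨S, ⟨hs, ht, h₁, h₂⟩, rfl⟩

lemma le_minCutCross {c : V → V → ℝ} {s t : V} {e : V × V} {b : ℝ}
    (hne : ∃ S : Finset V, s ∈ S ∧ t ∉ S ∧ e.1 ∈ S ∧ e.2 ∉ S)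
    (hb : ∀ S : Finset V, s ∈ S → t ∉ S → e.1 ∈ S → e.2 ∉ S → b ≤ cutCap c S) :
    b ≤ minCutCross c s t e := by
  obtain ⟨S, hS⟩ := hne
  rw [minCutCross_eq_sInf_image]
  exact le_csInf ⟨_, S, hS, rfl⟩
    (Set.forall_mem_image.2 fun S ⟨hs, ht, h₁, h₂⟩ => hb S hs ht h₁ h₂)

end

theorem min_crossing_cut_eq_of_minCut_lt_general {V : Type*} [Fintype V] [DecidableEq V]
    (c : V → V → ℝ) (s t : V) (hst : s ≠ t) (e : V × V)
    (h : minCut (delArc c e) s t < minCut c s t) :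
    minCutCross c s t e = minCut (delArc c e) s t + c e.1 e.2 := by
  obtain ⟨S₀, hs₀, ht₀, hS₀⟩ := exists_cutCap_eq_minCut (delArc c e) hst
  have hcross : e.1 ∈ S₀ ∧ e.2 ∉ S₀ := by
    by_contra hnot
    have hle := minCut_le_cutCap c hs₀ ht₀
    rw [← cutCap_delArc_of_not_crosses c hnot, hS₀] at hle
    exact h.not_ge hle
  apply le_antisymm
  · calc minCutCross c s t e ≤ cutCap c S₀ :=
          minCutCross_le_cutCap c hs₀ ht₀ hcross.1 hcross.2
      _ = minCut (delArc c e) s t + c e.1 e.2 := by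
          rw [cutCap_eq_cutCap_delArc_add_of_crosses c hcross.1 hcross.2, hS₀]
  · refine le_minCutCross ⟨S₀, hs₀, ht₀, hcross⟩ fun S hs ht h₁ h₂ => ?_
    rw [cutCap_eq_cutCap_delArc_add_of_crosses c h₁ h₂]
    exact add_le_add_left (minCut_le_cutCap _ hs ht) _

theorem min_crossing_cut_eq_of_minCut_lt {V : Type*} [Fintype V] [DecidableEq V]
    (c : V → V → ℝ) (hc : ∀ x y, 0 ≤ c x y) (s t : V) (hst : s ≠ t) (e : V × V)
    (h : minCut (delArc c e) s t < minCut c s t) :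
    minCutCross c s t e = minCut (delArc c e) s t + c e.1 e.2 :=
  min_crossing_cut_eq_of_minCut_lt_general c s t hst e h
end

section
/- Let B be the graph on nodes {s, t} ∪ {x₁,…,x_k} ∪ {y₁,…,y_k}, with edges {s, x_i} and {y_j, t} of capacity k for all i, j, and edges {x_i, y_j} of capacity 1 + ε_{i,j} with 0 < ε_{i,j} < 1/k for all i, j. Then the maximum s-t flow of B equals k². -/
/-!
The cut `{s}` has capacity `k · k`. Conversely, each of the `k²` paths `s → xᵢ → yⱼ → t` leaves
every s-t cut through one of its three edges; charging one unit per path to such an edge charges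
at most `k` units to an edge at `s` or `t` and one unit to an edge `xᵢ yⱼ`, so no cut is smaller
than `k²`. This is weak duality for the flow sending one unit along each of these paths.
-/

open Finset

/-- Nodes of the graph `B`: source `s`, sink `t`, and the bipartite core `x₁,…,x_k`,
`y₁,…,y_k`. -/
inductive BNode (k : ℕ) : Type
  | s : BNode k
  | t : BNode k
  | x : Fin k → BNode k
  | y : Fin k → BNode k
  deriving DecidableEq, Fintype

/-- The (symmetric) capacity function of the graph `B`: edges `{s, xᵢ}` and `{yⱼ, t}`
of capacity `k`, and edges `{xᵢ, yⱼ}` of capacity `1 + ε i j`. -/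
def Bcap (k : ℕ) (ε : Fin k → Fin k → ℝ) : BNode k → BNode k → ℝ
  | .s, .x _ => k
  | .x _, .s => k
  | .t, .y _ => k
  | .y _, .t => k
  | .x i, .y j => 1 + ε i j
  | .y j, .x i => 1 + ε i j
  | _, _ => 0

theorem cutCap_eq_sum_ite {V : Type*} [Fintype V] [DecidableEq V] (c : V → V → ℝ)
    (S : Finset V) :
    cutCap c S = ∑ u, ∑ v, if u ∈ S then (if v ∈ S then 0 else c u v) else 0 := by
  simp [cutCap, sum_ite, filter_not, compl_eq_univ_sdiff]

theorem minCut_eq_cutCap_of_forall_le {V : Type*} [Fintype V] [DecidableEq V]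
    {c : V → V → ℝ} {s t : V} {S₀ : Finset V} (hs : s ∈ S₀) (ht : t ∉ S₀)
    (hmin : ∀ S : Finset V, s ∈ S → t ∉ S → cutCap c S₀ ≤ cutCap c S) :
    minCut c s t = cutCap c S₀ :=
  IsLeast.csInf_eq ⟨⟨S₀, hs, ht, rfl⟩, by rintro _ ⟨S, hS, hT, rfl⟩; exact hmin S hS hT⟩

theorem BNode.sum_univ {k : ℕ} {M : Type*} [AddCommMonoid M] (f : BNode k → M) :
    ∑ v, f v = f .s + f .t + ∑ i, f (.x i) + ∑ j, f (.y j) := by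
  rw [← (BNode.proxyTypeEquiv k).sum_comp]
  simp only [Fintype.sum_sum_type, Fintype.sum_unique, add_assoc]
  rfl

section Bcap

variable (k : ℕ) (ε : Fin k → Fin k → ℝ) (S : Finset (BNode k))

theorem cutCap_Bcap (hs : .s ∈ S) (ht : .t ∉ S) :
    cutCap (Bcap k ε) S =
      ∑ i, (if .x i ∈ S then 0 else (k : ℝ)) +
      ∑ i, ∑ j, (if .x i ∈ S ∧ .y j ∉ S then 1 + ε i j else 0) +
      ∑ j, (if .y j ∈ S then (k : ℝ) else 0) +
      ∑ j, ∑ i, (if .y j ∈ S ∧ .x i ∉ S then 1 + ε i j else 0) := by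
  rw [cutCap_eq_sum_ite]
  simp only [BNode.sum_univ, Bcap, hs, ht, if_true, if_false]
  simp [ite_and, sum_ite_irrel, sum_add_distrib, add_assoc]

theorem cutCap_Bcap_singleton_s : cutCap (Bcap k ε) {.s} = (k : ℝ) ^ 2 := by
  rw [cutCap_Bcap k ε _ (mem_singleton_self _) (by simp)]
  simp [sq]

theorem sq_le_cutCap_Bcap (hε : ∀ i j, 0 ≤ ε i j) (hs : .s ∈ S) (ht : .t ∉ S) :
    (k : ℝ) ^ 2 ≤ cutCap (Bcap k ε) S := by
  have path_crosses : ∀ i j, (1 : ℝ) ≤ (if .x i ∈ S then 0 else 1) +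
      (if .x i ∈ S ∧ .y j ∉ S then 1 + ε i j else 0) + (if .y j ∈ S then 1 else 0) := by
    intro i j
    have := hε i j
    by_cases hx : BNode.x i ∈ S <;> by_cases hy : BNode.y j ∈ S <;> simp [hx, hy]; linarith
  have back_edges_nonneg :
      0 ≤ ∑ j, ∑ i, (if .y j ∈ S ∧ .x i ∉ S then 1 + ε i j else 0) := by
    refine sum_nonneg fun j _ => sum_nonneg fun i _ => ?_
    split_ifs <;> linarith [hε i j]
  calc (k : ℝ) ^ 2 = ∑ i : Fin k, ∑ j : Fin k, 1 := by simp [sq]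
    _ ≤ ∑ i, ∑ j, ((if .x i ∈ S then 0 else 1) +
          (if .x i ∈ S ∧ .y j ∉ S then 1 + ε i j else 0) + (if .y j ∈ S then 1 else 0)) := by
      gcongr with i _ j _
      exact path_crosses i j
    _ = ∑ i, (if .x i ∈ S then 0 else (k : ℝ)) +
          ∑ i, ∑ j, (if .x i ∈ S ∧ .y j ∉ S then 1 + ε i j else 0) +
          ∑ j, (if .y j ∈ S then (k : ℝ) else 0) := by
      simp only [sum_add_distrib]
      rw [sum_comm (f := fun i j => if BNode.y j ∈ S then (1 : ℝ) else 0)]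
      simp
    _ ≤ cutCap (Bcap k ε) S := by
      rw [cutCap_Bcap k ε S hs ht]
      linarith

end Bcap

theorem maxFlow_B_eq_k_sq_general (k : ℕ) (ε : Fin k → Fin k → ℝ)
    (hε : ∀ i j, 0 < ε i j ∧ ε i j < 1 / k) :
    minCut (Bcap k ε) BNode.s BNode.t = (k : ℝ) ^ 2 := by
  rw [← cutCap_Bcap_singleton_s k ε]
  refine minCut_eq_cutCap_of_forall_le (mem_singleton_self _) (by simp) fun S hs ht => ?_
  rw [cutCap_Bcap_singleton_s]
  exact sq_le_cutCap_Bcap k ε S (fun i j => (hε i j).1.le) hs ht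

theorem maxFlow_B_eq_k_sq (k : ℕ) (hk : 1 ≤ k) (ε : Fin k → Fin k → ℝ)
    (hε : ∀ i j, 0 < ε i j ∧ ε i j < 1 / k) :
    minCut (Bcap k ε) BNode.s BNode.t = (k : ℝ) ^ 2 :=
  maxFlow_B_eq_k_sq_general k ε hε
end

section
/- Let G' be as above (G plus node t' and high-capacity arc e = (t, t')), and let G'' be G' with an additional arc g = (s, t') of capacity F ≥ 0. Then in G'' with terminals s and t', the vitality of e is at least the vitality of g, i.e. flowVit_{G''}(e) ≥ flowVit_{G''}(g), if and only if the maximum s-t flow of G satisfies maxFlow_G(s, t) ≥ F. -/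
open Finset

section Aux

variable {V : Type*} [Fintype V] [DecidableEq V]

lemma cutCap_nonneg {c : V → V → ℝ} (hc : ∀ a b, 0 ≤ c a b) (S : Finset V) :
    0 ≤ cutCap c S :=
  Finset.sum_nonneg fun x _ => Finset.sum_nonneg fun y _ => hc x y

lemma cutCap_le_total {c : V → V → ℝ} (hc : ∀ a b, 0 ≤ c a b) (S : Finset V) :
    cutCap c S ≤ ∑ a : V, ∑ b : V, c a b := by
  refine le_trans (Finset.sum_le_sum fun x _ =>
      Finset.sum_le_sum_of_subset_of_nonneg (Finset.subset_univ _) fun y _ _ => hc x y) ?_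
  exact Finset.sum_le_sum_of_subset_of_nonneg (Finset.subset_univ S)
      fun x _ _ => Finset.sum_nonneg fun y _ => hc x y

lemma cutSet_finite (c : V → V → ℝ) (s t : V) :
    {r | ∃ S : Finset V, s ∈ S ∧ t ∉ S ∧ r = cutCap c S}.Finite := by
  apply Set.Finite.subset (Set.finite_range (cutCap c))
  rintro r ⟨S, _, _, rfl⟩
  exact ⟨S, rfl⟩

lemma cutCap_image_some (c : V → V → ℝ) (d : Option V → Option V → ℝ)
    (hd : ∀ a b, d (some a) (some b) = c a b) (T : Finset V) :
    cutCap d (T.image some) = cutCap c T + ∑ a ∈ T, d (some a) none := by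
  have hcompl : (T.image some)ᶜ = insert (none : Option V) (Tᶜ.image some) := by
    ext o; cases o <;> simp
  have key : ∀ a, ∑ y ∈ insert (none : Option V) (Tᶜ.image some), d (some a) y
      = (∑ b ∈ Tᶜ, c a b) + d (some a) none := by
    intro a
    rw [Finset.sum_insert (by simp),
      Finset.sum_image (fun a _ b _ h => Option.some_injective V h)]
    simp only [hd]
    ring
  unfold cutCap
  rw [Finset.sum_image (fun a _ b _ h => Option.some_injective V h), hcompl]
  simp only [key]
  rw [Finset.sum_add_distrib]

lemma exists_preimage_some (S : Finset (Option V)) (hS : (none : Option V) ∉ S) :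
    ∃ T : Finset V, S = T.image some := by
  refine ⟨Finset.univ.filter (fun v => some v ∈ S), ?_⟩
  ext o
  cases o with
  | none => simp [hS]
  | some a => simp

/-- Evaluate the min cut in the extended graph. -/
lemma minCut_option_eq (c : V → V → ℝ) (s : V) (d : Option V → Option V → ℝ)
    (hd0 : ∀ a b, 0 ≤ d a b) (hdc : ∀ a b, d (some a) (some b) = c a b) (v : ℝ)
    (hwit : ∃ T : Finset V, s ∈ T ∧ v = cutCap c T + ∑ a ∈ T, d (some a) none)
    (hub : ∀ T : Finset V, s ∈ T → v ≤ cutCap c T + ∑ a ∈ T, d (some a) none) :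
    minCut d (some s) none = v := by
  obtain ⟨T1, hT1, hv1⟩ := hwit
  have hbdd : BddBelow {r | ∃ S : Finset (Option V), some s ∈ S ∧ none ∉ S ∧ r = cutCap d S} := by
    refine ⟨0, ?_⟩
    rintro r ⟨S, _, _, rfl⟩
    exact cutCap_nonneg hd0 S
  apply le_antisymm
  · rw [hv1]
    apply csInf_le hbdd
    exact ⟨T1.image some, by simp [hT1], by simp, (cutCap_image_some c d hdc T1).symm⟩
  · have hne : {r | ∃ S : Finset (Option V), some s ∈ S ∧ none ∉ S ∧ r = cutCap d S}.Nonempty :=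
      ⟨cutCap d {some s}, {some s}, by simp, by simp, rfl⟩
    apply le_csInf hne
    rintro r ⟨S, hsS, hnS, rfl⟩
    obtain ⟨T, rfl⟩ := exists_preimage_some S hnS
    rw [cutCap_image_some c d hdc T]
    exact hub T (by simpa using hsS)

end Aux

theorem most_vital_arc_iff_maxFlow_ge {V : Type*} [Fintype V] [DecidableEq V]
    (c : V → V → ℝ) (hc : ∀ a b, 0 ≤ c a b) (s t : V) (hst : s ≠ t)
    (F M : ℝ) (hF : 0 ≤ F) (hM : (∑ a : V, ∑ b : V, c a b) + F < M)
    -- `G''` : `G` plus a new node `t' = none`, the arc `e = (t, t')` of capacity `M`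
    -- and the arc `g = (s, t')` of capacity `F`
    (c'' : Option V → Option V → ℝ)
    (hc'' : c'' = fun a b =>
      match a, b with
      | some a, some b => c a b
      | some a, none => if a = t then M else if a = s then F else 0
      | none, _ => 0) :
    minCut c'' (some s) none -
          minCut (delArc c'' (some t, (none : Option V))) (some s) none ≥
        minCut c'' (some s) none -
          minCut (delArc c'' (some s, (none : Option V))) (some s) none ↔
      F ≤ minCut c s t := by
  subst hc''
  have total_nonneg : 0 ≤ ∑ a : V, ∑ b : V, c a b :=
    Finset.sum_nonneg fun a _ => Finset.sum_nonneg fun b _ => hc a b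
  have hM0 : 0 < M := by linarith
  -- values of capacities on arcs to `none`
  set c'' : Option V → Option V → ℝ := fun a b =>
      match a, b with
      | some a, some b => c a b
      | some a, none => if a = t then M else if a = s then F else 0
      | none, _ => 0 with hc''
  have hc''ss : ∀ a b, c'' (some a) (some b) = c a b := fun a b => rfl
  have hc''0 : ∀ a b, 0 ≤ c'' a b := by
    intro a b
    cases a with
    | none => simp [hc'']
    | some a =>
      cases b with
      | some b => exact hc a b
      | none =>
        show (0 : ℝ) ≤ if a = t then M else if a = s then F else 0
        split_ifs <;> linarith
  have hce : ∀ a, c'' (some a) none = (if a = t then M else 0) + (if a = s then F else 0) := by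
    intro a
    show (if a = t then M else if a = s then F else 0) = _
    by_cases h1 : a = t
    · subst h1
      simp [Ne.symm hst]
    · simp [h1]
  have hde : ∀ a, delArc c'' (some t, none) (some a) none = if a = s then F else 0 := by
    intro a
    by_cases h1 : a = t
    · subst h1
      simp [delArc, Ne.symm hst]
    · simp [delArc, h1, hce]
  have hdg : ∀ a, delArc c'' (some s, none) (some a) none = if a = t then M else 0 := by
    intro a
    by_cases h1 : a = s
    · subst h1
      simp [delArc, hst]
    · simp [delArc, h1, hce]
  have hdess : ∀ a b, delArc c'' (some t, none) (some a) (some b) = c a b := by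
    intro a b; simp [delArc, hc''ss]
  have hdgss : ∀ a b, delArc c'' (some s, none) (some a) (some b) = c a b := by
    intro a b; simp [delArc, hc''ss]
  have hde0 : ∀ a b, 0 ≤ delArc c'' (some t, none) a b := by
    intro a b
    unfold delArc
    split_ifs
    · exact le_refl 0
    · exact hc''0 a b
  have hdg0 : ∀ a b, 0 ≤ delArc c'' (some s, none) a b := by
    intro a b
    unfold delArc
    split_ifs
    · exact le_refl 0
    · exact hc''0 a b
  -- sums of the arcs-to-none capacities
  have sum_c'' : ∀ T : Finset V, ∑ a ∈ T, c'' (some a) none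
      = (if t ∈ T then M else 0) + (if s ∈ T then F else 0) := by
    intro T
    simp only [hce]
    rw [Finset.sum_add_distrib, Finset.sum_ite_eq' T t (fun _ => M),
      Finset.sum_ite_eq' T s (fun _ => F)]
  have sum_de : ∀ T : Finset V, ∑ a ∈ T, delArc c'' (some t, none) (some a) none
      = (if s ∈ T then F else 0) := by
    intro T
    simp only [hde]
    rw [Finset.sum_ite_eq' T s (fun _ => F)]
  have sum_dg : ∀ T : Finset V, ∑ a ∈ T, delArc c'' (some s, none) (some a) none
      = (if t ∈ T then M else 0) := by
    intro T
    simp only [hdg]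
    rw [Finset.sum_ite_eq' T t (fun _ => M)]
  -- facts about the min cut of `G`
  have hbddc : BddBelow {r | ∃ S : Finset V, s ∈ S ∧ t ∉ S ∧ r = cutCap c S} := by
    refine ⟨0, ?_⟩
    rintro r ⟨S, _, _, rfl⟩
    exact cutCap_nonneg hc S
  have mc_le : ∀ T : Finset V, s ∈ T → t ∉ T → minCut c s t ≤ cutCap c T :=
    fun T h1 h2 => csInf_le hbddc ⟨T, h1, h2, rfl⟩
  obtain ⟨T0, hsT0, htT0, hT0⟩ : ∃ T0 : Finset V, s ∈ T0 ∧ t ∉ T0 ∧ minCut c s t = cutCap c T0 := by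
    have hne : {r | ∃ S : Finset V, s ∈ S ∧ t ∉ S ∧ r = cutCap c S}.Nonempty :=
      ⟨cutCap c {s}, {s}, by simp, by simp [Ne.symm hst], rfl⟩
    exact Set.Nonempty.csInf_mem hne (cutSet_finite c s t)
  have mc_nonneg : 0 ≤ minCut c s t := hT0 ▸ cutCap_nonneg hc T0
  have mc_le_M : minCut c s t ≤ M := by
    have := cutCap_le_total hc T0
    linarith [hT0 ▸ this]
  -- the three min-cut computations
  have h1 : minCut c'' (some s) none = minCut c s t + F := by
    apply minCut_option_eq c s c'' hc''0 hc''ss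
    · refine ⟨T0, hsT0, ?_⟩
      rw [sum_c'', if_neg htT0, if_pos hsT0, hT0]
      ring
    · intro T hT
      rw [sum_c'', if_pos hT]
      by_cases ht : t ∈ T
      · rw [if_pos ht]
        have := cutCap_nonneg hc T
        linarith
      · rw [if_neg ht]
        have := mc_le T hT ht
        linarith
  have h2 : minCut (delArc c'' (some t, (none : Option V))) (some s) none = F := by
    apply minCut_option_eq c s _ hde0 hdess
    · refine ⟨Finset.univ, Finset.mem_univ s, ?_⟩
      rw [sum_de, if_pos (Finset.mem_univ s)]
      have : cutCap c Finset.univ = 0 := by simp [cutCap]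
      rw [this]
      ring
    · intro T hT
      rw [sum_de, if_pos hT]
      have := cutCap_nonneg hc T
      linarith
  have h3 : minCut (delArc c'' (some s, (none : Option V))) (some s) none = minCut c s t := by
    apply minCut_option_eq c s _ hdg0 hdgss
    · refine ⟨T0, hsT0, ?_⟩
      rw [sum_dg, if_neg htT0, hT0]
      ring
    · intro T hT
      rw [sum_dg]
      by_cases ht : t ∈ T
      · rw [if_pos ht]
        have := cutCap_nonneg hc T
        linarith
      · rw [if_neg ht]
        have := mc_le T hT ht
        linarith
  rw [h1, h2, h3]
  constructor <;> intro h <;> linarith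
end
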